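/- Let $\theta, \theta_\mu \in C^2[0,1]$ satisfy the logistic and linearized equations as above with homogeneous Neumann conditions, $\theta > 0$ non-constant, and suppose $\theta' \geq 0$, $\theta' \not\equiv 0$ on $(0,\eta)$ and $\theta' \leq 0$, $\theta' \not\equiv 0$ on $(\eta,1)$ for some $\eta \in [0,1]$ (so $\eta$ is a global maximum point of $\theta$). If additionally $\theta_\mu'(\eta) \geq 0$ implies (via integration of the Wronskian identity over $[\eta,1]$) that $\int_\eta^1 \theta^2\theta_\mu \le 0$, then $\theta_\mu(\eta) < 0$. -/

import Mathlib

/-!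
Write `w = θ_μ` and `U = μ (θ w' - θ' w) + θ θ'`. The two equations give `U' = θ² w + θ'²` and
`μ θ² (w / θ)' = U - θ θ'`, and the Neumann conditions give `U(0) = U(1) = 0`. Suppose `w(η) ≥ 0`.
If `U(η) ≥ 0`, then on `[η, 1]`, where `θ' ≤ 0`, the pair `(w / θ, U)` satisfies a cooperative
linear system of differential inequalities, so both stay nonnegative; then `U` is nondecreasing
there, and strictly so because `θ' ≢ 0`, contradicting `U(1) = 0 ≤ U(η)`. If `U(η) < 0`, the same
argument run backwards from `η` over `[0, η]`, where `θ' ≥ 0`, gives `w ≥ 0` there, so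
`0 = U(0) ≤ U(η) < 0`.
-/

open Set Filter Topology

theorem ContDiffOn.hasDerivAt_derivWithin_Icc {f : ℝ → ℝ} {n : WithTop ℕ∞} {a b x : ℝ}
    (hf : ContDiffOn ℝ n f (Icc a b)) (hn : n ≠ 0) (hx : x ∈ Ioo a b) :
    HasDerivAt f (derivWithin f (Icc a b) x) x :=
  ((hf.differentiableOn hn) x (Ioo_subset_Icc_self hx)).hasDerivWithinAt.hasDerivAt
    (Icc_mem_nhds hx.1 hx.2)

theorem monotoneOn_Icc_of_hasDerivAt_nonneg {a b : ℝ} {f f' : ℝ → ℝ}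
    (hf : ContinuousOn f (Icc a b)) (hf' : ∀ x ∈ Ioo a b, HasDerivAt f (f' x) x)
    (hf'₀ : ∀ x ∈ Ioo a b, 0 ≤ f' x) : MonotoneOn f (Icc a b) := by
  refine monotoneOn_of_hasDerivWithinAt_nonneg (f' := f') (convex_Icc a b) hf (fun x hx => ?_) ?_
  · rw [interior_Icc] at hx ⊢
    exact (hf' x hx).hasDerivWithinAt
  · rwa [interior_Icc]

theorem add_sub_mem_Icc {a b x : ℝ} (hx : x ∈ Icc a b) : a + b - x ∈ Icc a b :=
  ⟨by linarith [hx.2], by linarith [hx.1]⟩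

theorem add_sub_mem_Ioo {a b x : ℝ} (hx : x ∈ Ioo a b) : a + b - x ∈ Ioo a b :=
  ⟨by linarith [hx.2], by linarith [hx.1]⟩

theorem nonneg_of_forall_pos_add_mul {p c : ℝ} (hc : 0 < c) (h : ∀ ε > 0, 0 < p + ε * c) :
    0 ≤ p :=
  le_of_forall_pos_lt_add fun δ hδ => by
    simpa [div_mul_cancel₀ δ hc.ne'] using h (δ / c) (div_pos hδ hc)

theorem pos_of_cooperative {a b : ℝ} {P Q P' Q' : ℝ → ℝ}
    (hP : ContinuousOn P (Icc a b)) (hQ : ContinuousOn Q (Icc a b))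
    (hP' : ∀ x ∈ Ioo a b, HasDerivAt P (P' x) x) (hQ' : ∀ x ∈ Ioo a b, HasDerivAt Q (Q' x) x)
    (hcoop : ∀ x ∈ Ioo a b, 0 < P x → 0 < Q x → 0 < P' x ∧ 0 < Q' x)
    (hPa : 0 < P a) (hQa : 0 < Q a) :
    ∀ x ∈ Icc a b, 0 < P x ∧ 0 < Q x := by
  by_contra! hexit
  set S := Icc a b ∩ ({x | P x ≤ 0} ∪ {x | Q x ≤ 0}) with hSdef
  have hS : IsClosed S := by
    rw [hSdef, inter_union_distrib_left]
    exact (hP.preimage_isClosed_of_isClosed isClosed_Icc isClosed_Iic).union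
      (hQ.preimage_isClosed_of_isClosed isClosed_Icc isClosed_Iic)
  have hSne : S.Nonempty := by
    obtain ⟨x, hx, hxP⟩ := hexit
    exact ⟨x, hx, (le_or_gt (P x) 0).imp id hxP⟩
  have hSbdd : BddBelow S := ⟨a, fun x hx => hx.1.1⟩
  obtain ⟨⟨has, hsb⟩, hs⟩ : sInf S ∈ S := hS.csInf_mem hSne hSbdd
  set s := sInf S
  have hbefore : ∀ x ∈ Ico a s, 0 < P x ∧ 0 < Q x := by
    intro x hx
    by_contra! hxP
    have hxS : x ∈ S := ⟨⟨hx.1, hx.2.le.trans hsb⟩, (le_or_gt (P x) 0).imp id hxP⟩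
    exact (csInf_le hSbdd hxS).not_gt hx.2
  have hcoop' : ∀ x ∈ Ioo a s, 0 < P' x ∧ 0 < Q' x := fun x hx =>
    hcoop x ⟨hx.1, hx.2.trans_le hsb⟩ (hbefore x (Ioo_subset_Ico_self hx)).1
      (hbefore x (Ioo_subset_Ico_self hx)).2
  have hsub : Ioo a s ⊆ Ioo a b := Ioo_subset_Ioo_right hsb
  have hPs : P a ≤ P s :=
    monotoneOn_Icc_of_hasDerivAt_nonneg (hP.mono (Icc_subset_Icc_right hsb))
      (fun x hx => hP' x (hsub hx)) (fun x hx => (hcoop' x hx).1.le)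
      (left_mem_Icc.2 has) (right_mem_Icc.2 has) has
  have hQs : Q a ≤ Q s :=
    monotoneOn_Icc_of_hasDerivAt_nonneg (hQ.mono (Icc_subset_Icc_right hsb))
      (fun x hx => hQ' x (hsub hx)) (fun x hx => (hcoop' x hx).2.le)
      (left_mem_Icc.2 has) (right_mem_Icc.2 has) has
  rcases hs with hs | hs
  · exact (hPa.trans_le hPs).not_ge hs
  · exact (hQa.trans_le hQs).not_ge hs

theorem nonneg_of_cooperative {a b : ℝ} {P Q P' Q' α β : ℝ → ℝ}
    (hP : ContinuousOn P (Icc a b)) (hQ : ContinuousOn Q (Icc a b))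
    (hP' : ∀ x ∈ Ioo a b, HasDerivAt P (P' x) x) (hQ' : ∀ x ∈ Ioo a b, HasDerivAt Q (Q' x) x)
    (hα : ContinuousOn α (Icc a b)) (hβ : ContinuousOn β (Icc a b))
    (hα₀ : ∀ x ∈ Icc a b, 0 ≤ α x) (hβ₀ : ∀ x ∈ Icc a b, 0 ≤ β x)
    (hPQ : ∀ x ∈ Ioo a b, α x * Q x ≤ P' x) (hQP : ∀ x ∈ Ioo a b, β x * P x ≤ Q' x)
    (hPa : 0 ≤ P a) (hQa : 0 ≤ Q a) :
    ∀ x ∈ Icc a b, 0 ≤ P x ∧ 0 ≤ Q x := by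
  obtain ⟨K, hK⟩ := isCompact_Icc.bddAbove_image (hα.add hβ)
  have hαK : ∀ x ∈ Icc a b, α x ≤ K := fun x hx =>
    (le_add_of_nonneg_right (hβ₀ x hx)).trans (hK (mem_image_of_mem _ hx))
  have hβK : ∀ x ∈ Icc a b, β x ≤ K := fun x hx =>
    (le_add_of_nonneg_left (hα₀ x hx)).trans (hK (mem_image_of_mem _ hx))
  -- Adding `E = ε e^{(K + 1) x}` to `P` and `Q` makes the coupled inequalities strict.
  have hpert : ∀ ε > 0, ∀ x ∈ Icc a b,
      0 < P x + ε * Real.exp ((K + 1) * x) ∧ 0 < Q x + ε * Real.exp ((K + 1) * x) := by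
    intro ε hε
    set E := fun x => ε * Real.exp ((K + 1) * x)
    have hE : ∀ x, HasDerivAt E ((K + 1) * E x) x := fun x => by
      simpa [E, mul_comm, mul_left_comm] using
        (((hasDerivAt_id x).const_mul (K + 1)).exp).const_mul ε
    have hEpos : ∀ x, 0 < E x := fun x => by positivity
    have hEc : ContinuousOn E (Icc a b) := fun x _ => (hE x).continuousAt.continuousWithinAt
    refine pos_of_cooperative (hP.add hEc) (hQ.add hEc) (fun x hx => (hP' x hx).add (hE x))
      (fun x hx => (hQ' x hx).add (hE x)) (fun x hx hPx hQx => ⟨?_, ?_⟩)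
      (by linarith [hEpos a]) (by linarith [hEpos a])
    · have h1 := mul_le_mul_of_nonneg_left (neg_le_iff_add_nonneg.2 hQx.le)
        (hα₀ x (Ioo_subset_Icc_self hx))
      have h2 := mul_le_mul_of_nonneg_right (hαK x (Ioo_subset_Icc_self hx)) (hEpos x).le
      linarith [hPQ x hx, hEpos x]
    · have h1 := mul_le_mul_of_nonneg_left (neg_le_iff_add_nonneg.2 hPx.le)
        (hβ₀ x (Ioo_subset_Icc_self hx))
      have h2 := mul_le_mul_of_nonneg_right (hβK x (Ioo_subset_Icc_self hx)) (hEpos x).le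
      linarith [hQP x hx, hEpos x]
  exact fun x hx =>
    ⟨nonneg_of_forall_pos_add_mul (Real.exp_pos _) fun ε hε => (hpert ε hε x hx).1,
      nonneg_of_forall_pos_add_mul (Real.exp_pos _) fun ε hε => (hpert ε hε x hx).2⟩

def shiftedWronskian (μ : ℝ) (θ θ' w w' : ℝ → ℝ) (x : ℝ) : ℝ :=
  μ * (θ x * w' x - θ' x * w x) + θ x * θ' x

theorem hasDerivAt_shiftedWronskian {μ m θ'' w'' x : ℝ} {θ θ' w w' : ℝ → ℝ}
    (hθ : HasDerivAt θ (θ' x) x) (hθ' : HasDerivAt θ' θ'' x)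
    (hw : HasDerivAt w (w' x) x) (hw' : HasDerivAt w' w'' x)
    (hode : μ * θ'' + θ x * (m - θ x) = 0) (hodeμ : μ * w'' + (m - 2 * θ x) * w x = -θ'') :
    HasDerivAt (shiftedWronskian μ θ θ' w w') (θ x ^ 2 * w x + θ' x ^ 2) x :=
  ((((hθ.mul hw').sub (hθ'.mul hw)).const_mul μ).add (hθ.mul hθ')).congr_deriv
    (by linear_combination θ x * hodeμ - w x * hode)

theorem hasDerivAt_ratio_shiftedWronskian {μ x : ℝ} {θ θ' w w' : ℝ → ℝ} (hμ : μ ≠ 0)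
    (hθ : HasDerivAt θ (θ' x) x) (hw : HasDerivAt w (w' x) x) (hθx : θ x ≠ 0) :
    HasDerivAt (fun y => w y / θ y)
      ((shiftedWronskian μ θ θ' w w' x - θ x * θ' x) / (μ * θ x ^ 2)) x :=
  (hw.div hθ hθx).congr_deriv (by simp only [shiftedWronskian]; field_simp; ring)

structure WronskianSystem (μ : ℝ) (θ θ' w U : ℝ → ℝ) (a b : ℝ) : Prop where
  θ_pos : ∀ x ∈ Icc a b, 0 < θ x
  continuousOn_θ : ContinuousOn θ (Icc a b)
  continuousOn_w : ContinuousOn w (Icc a b)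
  continuousOn_U : ContinuousOn U (Icc a b)
  hasDerivAt_U : ∀ x ∈ Ioo a b, HasDerivAt U (θ x ^ 2 * w x + θ' x ^ 2) x
  hasDerivAt_ratio : ∀ x ∈ Ioo a b,
    HasDerivAt (fun y => w y / θ y) ((U x - θ x * θ' x) / (μ * θ x ^ 2)) x

theorem wronskianSystem_of_ode {μ a b : ℝ} {m θ w : ℝ → ℝ} (hμ : 0 < μ) (hab : a < b)
    (hθ : ContDiffOn ℝ 2 θ (Icc a b)) (hw : ContDiffOn ℝ 2 w (Icc a b))
    (hθpos : ∀ x ∈ Icc a b, 0 < θ x)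
    (hode : ∀ x ∈ Ioo a b,
      μ * derivWithin (derivWithin θ (Icc a b)) (Icc a b) x + θ x * (m x - θ x) = 0)
    (hodeμ : ∀ x ∈ Ioo a b,
      μ * derivWithin (derivWithin w (Icc a b)) (Icc a b) x + (m x - 2 * θ x) * w x
        = -derivWithin (derivWithin θ (Icc a b)) (Icc a b) x) :
    WronskianSystem μ θ (derivWithin θ (Icc a b)) w
      (shiftedWronskian μ θ (derivWithin θ (Icc a b)) w (derivWithin w (Icc a b))) a b := by
  have hθ' : ContDiffOn ℝ 1 (derivWithin θ (Icc a b)) (Icc a b) :=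
    hθ.derivWithin (uniqueDiffOn_Icc hab) (by norm_num)
  have hw' : ContDiffOn ℝ 1 (derivWithin w (Icc a b)) (Icc a b) :=
    hw.derivWithin (uniqueDiffOn_Icc hab) (by norm_num)
  refine ⟨hθpos, hθ.continuousOn, hw.continuousOn, ?_, fun x hx => ?_, fun x hx => ?_⟩
  · exact (continuousOn_const.mul ((hθ.continuousOn.mul hw'.continuousOn).sub
      (hθ'.continuousOn.mul hw.continuousOn))).add (hθ.continuousOn.mul hθ'.continuousOn)
  · exact hasDerivAt_shiftedWronskian (hθ.hasDerivAt_derivWithin_Icc two_ne_zero hx)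
      (hθ'.hasDerivAt_derivWithin_Icc one_ne_zero hx) (hw.hasDerivAt_derivWithin_Icc two_ne_zero hx)
      (hw'.hasDerivAt_derivWithin_Icc one_ne_zero hx) (hode x hx) (hodeμ x hx)
  · exact hasDerivAt_ratio_shiftedWronskian hμ.ne'
      (hθ.hasDerivAt_derivWithin_Icc two_ne_zero hx) (hw.hasDerivAt_derivWithin_Icc two_ne_zero hx)
      (hθpos x (Ioo_subset_Icc_self hx)).ne'

namespace WronskianSystem

variable {μ a b : ℝ} {θ θ' w U : ℝ → ℝ}

theorem mono {c d : ℝ} (h : WronskianSystem μ θ θ' w U a b) (hac : a ≤ c) (hdb : d ≤ b) :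
    WronskianSystem μ θ θ' w U c d :=
  have hIcc := Icc_subset_Icc hac hdb
  have hIoo := Ioo_subset_Ioo hac hdb
  ⟨fun x hx => h.θ_pos x (hIcc hx), h.continuousOn_θ.mono hIcc, h.continuousOn_w.mono hIcc,
    h.continuousOn_U.mono hIcc, fun x hx => h.hasDerivAt_U x (hIoo hx),
    fun x hx => h.hasDerivAt_ratio x (hIoo hx)⟩

theorem reflect (h : WronskianSystem μ θ θ' w U a b) :
    WronskianSystem μ (fun x => θ (a + b - x)) (fun x => -θ' (a + b - x)) (fun x => w (a + b - x))
      (fun x => -U (a + b - x)) a b := by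
  have hcont : ContinuousOn (fun x : ℝ => a + b - x) (Icc a b) := by fun_prop
  refine ⟨fun x hx => h.θ_pos _ (add_sub_mem_Icc hx),
    h.continuousOn_θ.comp hcont fun x hx => add_sub_mem_Icc hx,
    h.continuousOn_w.comp hcont fun x hx => add_sub_mem_Icc hx,
    (h.continuousOn_U.comp hcont fun x hx => add_sub_mem_Icc hx).neg, fun x hx => ?_,
    fun x hx => ?_⟩
  · exact ((h.hasDerivAt_U _ (add_sub_mem_Ioo hx)).comp_const_sub (a + b) x).neg.congr_deriv
      (by ring)
  · exact ((h.hasDerivAt_ratio _ (add_sub_mem_Ioo hx)).comp_const_sub (a + b) x).congr_deriv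
      (by ring)

theorem monotoneOn (h : WronskianSystem μ θ θ' w U a b) (hw : ∀ x ∈ Icc a b, 0 ≤ w x) :
    MonotoneOn U (Icc a b) :=
  monotoneOn_Icc_of_hasDerivAt_nonneg h.continuousOn_U h.hasDerivAt_U fun x hx =>
    add_nonneg (mul_nonneg (sq_nonneg _) (hw x (Ioo_subset_Icc_self hx))) (sq_nonneg _)

theorem nonneg_of_antitone (h : WronskianSystem μ θ θ' w U a b) (hμ : 0 < μ)
    (hθ' : ∀ x ∈ Ioo a b, θ' x ≤ 0) (hwa : 0 ≤ w a) (hUa : 0 ≤ U a) :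
    ∀ x ∈ Icc a b, 0 ≤ w x := by
  intro x hx
  have hθ := h.θ_pos
  have hcoop := nonneg_of_cooperative (P := fun y => w y / θ y) (α := fun y => (μ * θ y ^ 2)⁻¹)
    (β := fun y => θ y ^ 3)
    (h.continuousOn_w.div h.continuousOn_θ fun y hy => (hθ y hy).ne') h.continuousOn_U
    h.hasDerivAt_ratio h.hasDerivAt_U
    ((continuousOn_const.mul (h.continuousOn_θ.pow 2)).inv₀ fun y hy =>
      (mul_pos hμ (pow_pos (hθ y hy) 2)).ne')
    (h.continuousOn_θ.pow 3) (fun y hy => by positivity)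
    (fun y hy => by have := hθ y hy; positivity)
    (fun y hy => ?_) (fun y hy => ?_) (div_nonneg hwa (hθ a (left_mem_Icc.2 (hx.1.trans hx.2))).le)
    hUa x hx
  · simpa using (le_div_iff₀ (hθ x hx)).1 hcoop.1
  · have hθy := hθ y (Ioo_subset_Icc_self hy)
    rw [inv_mul_eq_div]
    gcongr
    linarith [mul_nonpos_of_nonneg_of_nonpos hθy.le (hθ' y hy)]
  · have hθy := hθ y (Ioo_subset_Icc_self hy)
    have : θ y ^ 3 * (w y / θ y) = θ y ^ 2 * w y := by field_simp
    linarith [sq_nonneg (θ' y)]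

theorem nonneg_of_monotone (h : WronskianSystem μ θ θ' w U a b) (hμ : 0 < μ)
    (hθ' : ∀ x ∈ Ioo a b, 0 ≤ θ' x) (hwb : 0 ≤ w b) (hUb : U b ≤ 0) :
    ∀ x ∈ Icc a b, 0 ≤ w x := fun x hx => by
  simpa using h.reflect.nonneg_of_antitone hμ
    (fun y hy => neg_nonpos.2 (hθ' _ (add_sub_mem_Ioo hy))) (by simpa using hwb)
    (by simpa using hUb) (a + b - x) (add_sub_mem_Icc hx)

theorem lt_of_antitone (h : WronskianSystem μ θ θ' w U a b) (hμ : 0 < μ)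
    (hθ' : ∀ x ∈ Ioo a b, θ' x ≤ 0) {x₀ : ℝ} (hx₀ : x₀ ∈ Ioo a b) (hθ'x₀ : θ' x₀ ≠ 0)
    (hwa : 0 ≤ w a) (hUa : 0 ≤ U a) : U a < U b := by
  have hw := h.nonneg_of_antitone hμ hθ' hwa hUa
  have hU := h.monotoneOn hw
  have hab : a ≤ b := hx₀.1.le.trans hx₀.2.le
  refine (hU (left_mem_Icc.2 hab) (right_mem_Icc.2 hab) hab).lt_of_ne fun hUab => ?_
  have hconst : U =ᶠ[𝓝 x₀] fun _ => U a := by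
    filter_upwards [Icc_mem_nhds hx₀.1 hx₀.2] with y hy
    exact le_antisymm (hUab ▸ hU hy (right_mem_Icc.2 hab) hy.2) (hU (left_mem_Icc.2 hab) hy hy.1)
  have hderiv :=
    (h.hasDerivAt_U x₀ hx₀).unique ((hasDerivAt_const x₀ (U a)).congr_of_eventuallyEq hconst)
  have : 0 < θ' x₀ ^ 2 := by positivity
  linarith [mul_nonneg (sq_nonneg (θ x₀)) (hw x₀ (Ioo_subset_Icc_self hx₀))]

theorem le_of_monotone (h : WronskianSystem μ θ θ' w U a b) (hμ : 0 < μ) (hab : a ≤ b)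
    (hθ' : ∀ x ∈ Ioo a b, 0 ≤ θ' x) (hwb : 0 ≤ w b) (hUb : U b ≤ 0) : U a ≤ U b :=
  h.monotoneOn (h.nonneg_of_monotone hμ hθ' hwb hUb) (left_mem_Icc.2 hab) (right_mem_Icc.2 hab) hab

end WronskianSystem

theorem theta_mu_neg_at_max_general (μ : ℝ) (hμ : 0 < μ) (m θ θμ : ℝ → ℝ)
    (hθreg : ContDiffOn ℝ 2 θ (Icc 0 1)) (hθμreg : ContDiffOn ℝ 2 θμ (Icc 0 1))
    (hθpos : ∀ x ∈ Icc (0:ℝ) 1, 0 < θ x)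
    (hode : ∀ x ∈ Ioo (0:ℝ) 1,
      μ * derivWithin (derivWithin θ (Icc 0 1)) (Icc 0 1) x + θ x * (m x - θ x) = 0)
    (hodeμ : ∀ x ∈ Ioo (0:ℝ) 1,
      μ * derivWithin (derivWithin θμ (Icc 0 1)) (Icc 0 1) x + (m x - 2 * θ x) * θμ x
        = -derivWithin (derivWithin θ (Icc 0 1)) (Icc 0 1) x)
    (hbc0 : derivWithin θ (Icc 0 1) 0 = 0) (hbc1 : derivWithin θ (Icc 0 1) 1 = 0)
    (hbcμ0 : derivWithin θμ (Icc 0 1) 0 = 0) (hbcμ1 : derivWithin θμ (Icc 0 1) 1 = 0)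
    (η : ℝ) (hη : η ∈ Icc (0:ℝ) 1)
    (hup : ∀ x ∈ Ioo (0:ℝ) η, 0 ≤ derivWithin θ (Icc 0 1) x)
    (hdown : ∀ x ∈ Ioo η (1:ℝ), derivWithin θ (Icc 0 1) x ≤ 0)
    (hdownne : ∃ x ∈ Ioo η (1:ℝ), derivWithin θ (Icc 0 1) x ≠ 0) :
    θμ η < 0 := by
  by_contra! hwη
  obtain ⟨x₀, hx₀, hθ'x₀⟩ := hdownne
  have hsys := wronskianSystem_of_ode hμ zero_lt_one hθreg hθμreg hθpos hode hodeμ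
  set U := shiftedWronskian μ θ (derivWithin θ (Icc 0 1)) θμ (derivWithin θμ (Icc 0 1))
  have hU0 : U 0 = 0 := by simp [U, shiftedWronskian, hbc0, hbcμ0]
  have hU1 : U 1 = 0 := by simp [U, shiftedWronskian, hbc1, hbcμ1]
  rcases le_or_gt 0 (U η) with hUη | hUη
  · linarith [(hsys.mono hη.1 le_rfl).lt_of_antitone hμ hdown hx₀ hθ'x₀ hwη hUη]
  · linarith [(hsys.mono le_rfl hη.2).le_of_monotone hμ hη.1 hup hwη hUη.le]

/-- At a global maximum point `η` of an up-then-down profile `θ`, the μ-derivative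
`θ_μ(η)` is strictly negative. -/
theorem theta_mu_neg_at_max (μ : ℝ) (hμ : 0 < μ) (m θ θμ : ℝ → ℝ)
    (hm : ContDiffOn ℝ 1 m (Icc 0 1))
    (hmnonconst : ∃ x ∈ Icc (0:ℝ) 1, ∃ y ∈ Icc (0:ℝ) 1, m x ≠ m y)
    (hθreg : ContDiffOn ℝ 2 θ (Icc 0 1)) (hθμreg : ContDiffOn ℝ 2 θμ (Icc 0 1))
    (hθpos : ∀ x ∈ Icc (0:ℝ) 1, 0 < θ x)
    (hθnonconst : ∃ x ∈ Icc (0:ℝ) 1, ∃ y ∈ Icc (0:ℝ) 1, θ x ≠ θ y)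
    (hode : ∀ x ∈ Ioo (0:ℝ) 1,
      μ * derivWithin (derivWithin θ (Icc 0 1)) (Icc 0 1) x + θ x * (m x - θ x) = 0)
    (hodeμ : ∀ x ∈ Ioo (0:ℝ) 1,
      μ * derivWithin (derivWithin θμ (Icc 0 1)) (Icc 0 1) x + (m x - 2 * θ x) * θμ x
        = -derivWithin (derivWithin θ (Icc 0 1)) (Icc 0 1) x)
    (hbc0 : derivWithin θ (Icc 0 1) 0 = 0) (hbc1 : derivWithin θ (Icc 0 1) 1 = 0)
    (hbcμ0 : derivWithin θμ (Icc 0 1) 0 = 0) (hbcμ1 : derivWithin θμ (Icc 0 1) 1 = 0)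
    (η : ℝ) (hη : η ∈ Icc (0:ℝ) 1)
    (hup : ∀ x ∈ Ioo (0:ℝ) η, 0 ≤ derivWithin θ (Icc 0 1) x)
    (hupne : ∃ x ∈ Ioo (0:ℝ) η, derivWithin θ (Icc 0 1) x ≠ 0)
    (hdown : ∀ x ∈ Ioo η (1:ℝ), derivWithin θ (Icc 0 1) x ≤ 0)
    (hdownne : ∃ x ∈ Ioo η (1:ℝ), derivWithin θ (Icc 0 1) x ≠ 0)
    (hkey : 0 ≤ derivWithin θμ (Icc 0 1) η →
      (∫ x in η..(1:ℝ), (θ x) ^ 2 * θμ x) ≤ 0) :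
    θμ η < 0 :=
  theta_mu_neg_at_max_general μ hμ m θ θμ hθreg hθμreg hθpos hode hodeμ hbc0 hbc1 hbcμ0 hbcμ1 η hη
    hup hdown hdownne
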